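/- arXiv:1811.00803 — 2 statements merged into one kernel-verified Lean document; each statement's English description precedes it below -/
import Mathlib

section
/- Let Φ be a root system with base Δ in a real inner product space, α ∈ Δ, and λ' a vector satisfying ⟨λ', β∨⟩ ≤ 0 for all β ∈ Δ and ⟨λ', α∨⟩ = -1. Then for every positive root β ≠ α, one has ⟨λ', β∨⟩ ≤ -(1/2)⟨α, β∨⟩. -/
/-- The pairing `⟨x, y∨⟩ = 2(x,y)/(y,y)` of a vector with the coroot of `y`. -/
noncomputable def coPair {V : Type*} [NormedAddCommGroup V] [InnerProductSpace ℝ V]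
    (x y : V) : ℝ := 2 * (inner ℝ x y : ℝ) / (inner ℝ y y : ℝ)

/-!
Put `μ = 2λ' + α`. Since the pairing is linear in its first argument, the claim says
`⟨μ, β∨⟩ ≤ 0`, i.e. `(μ, β) ≤ 0`. Now `⟨μ, α∨⟩ = -2 + 2 = 0`, and for the other simple roots
`⟨μ, γ∨⟩ ≤ 0` because both summands are; as `β` is a nonnegative combination of simple roots,
`(μ, β) ≤ 0`.
-/

section coPair

variable {V : Type*} [NormedAddCommGroup V] [InnerProductSpace ℝ V]

theorem coPair_add_left (x z y : V) : coPair (x + z) y = coPair x y + coPair z y := by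
  simp only [coPair, inner_add_left, mul_add, add_div]

theorem coPair_smul_left (r : ℝ) (x y : V) : coPair (r • x) y = r * coPair x y := by
  simp only [coPair, real_inner_smul_left, mul_div_assoc, mul_left_comm]

theorem coPair_self {x : V} (hx : x ≠ 0) : coPair x x = 2 := by
  have : (inner ℝ x x : ℝ) ≠ 0 := inner_self_ne_zero.mpr hx
  simp only [coPair, mul_div_assoc, div_self this, mul_one]

theorem coPair_zero_right (x : V) : coPair x 0 = 0 := by
  simp [coPair]

theorem coPair_nonpos_iff {x y : V} : coPair x y ≤ 0 ↔ (inner ℝ x y : ℝ) ≤ 0 := by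
  rcases eq_or_ne y 0 with rfl | hy
  · simp [coPair]
  · have hyy : (0 : ℝ) < inner ℝ y y := real_inner_self_pos.mpr hy
    rw [coPair, div_le_iff₀ hyy, zero_mul]
    constructor <;> intro h <;> linarith

end coPair

theorem inner_sum_smul_nonpos {V ι : Type*} [NormedAddCommGroup V] [InnerProductSpace ℝ V]
    {s : Finset ι} {c : ι → ℝ} {v : ι → V} (μ : V) (hc : ∀ i ∈ s, 0 ≤ c i)
    (hμ : ∀ i ∈ s, (inner ℝ μ (v i) : ℝ) ≤ 0) :
    (inner ℝ μ (∑ i ∈ s, c i • v i) : ℝ) ≤ 0 := by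
  rw [inner_sum]
  refine Finset.sum_nonpos fun i hi => ?_
  rw [real_inner_smul_right]
  exact mul_nonpos_of_nonneg_of_nonpos (hc i hi) (hμ i hi)

theorem stmt6_general {V : Type*} [NormedAddCommGroup V] [InnerProductSpace ℝ V]
    (Δ : Finset V) (α : V) (hαΔ : α ∈ Δ)
    (hneg : ∀ γ ∈ Δ, ∀ δ ∈ Δ, γ ≠ δ → (inner ℝ γ δ : ℝ) ≤ 0)
    (lam' : V)
    (h1 : ∀ γ ∈ Δ, coPair lam' γ ≤ 0)
    (h2 : coPair lam' α = -1)
    (β : V) (n : V → ℕ) (hβ : β = ∑ γ ∈ Δ, (n γ : ℝ) • γ) :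
    coPair lam' β ≤ -(1/2) * coPair α β := by
  have hpair (y : V) : coPair ((2 : ℝ) • lam' + α) y = 2 * coPair lam' y + coPair α y := by
    rw [coPair_add_left, coPair_smul_left]
  have hα0 : α ≠ 0 := by
    rintro rfl
    rw [coPair_zero_right] at h2
    norm_num at h2
  have hμΔ : ∀ γ ∈ Δ, coPair ((2 : ℝ) • lam' + α) γ ≤ 0 := by
    intro γ hγ
    rw [hpair]
    rcases eq_or_ne γ α with rfl | hγα
    · rw [h2, coPair_self hα0]
      norm_num
    · linarith [h1 γ hγ, coPair_nonpos_iff.mpr (hneg α hαΔ γ hγ hγα.symm)]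
  have hμβ : coPair ((2 : ℝ) • lam' + α) β ≤ 0 := by
    rw [coPair_nonpos_iff, hβ]
    exact inner_sum_smul_nonpos _ (fun γ _ => Nat.cast_nonneg _)
      fun γ hγ => coPair_nonpos_iff.mp (hμΔ γ hγ)
  linarith [hpair β]

/-- Let `Δ` be a base of a root system (simple roots are nonzero and pairwise
non-positively correlated) and `α ∈ Δ`.  If `λ'` satisfies `⟨λ', γ∨⟩ ≤ 0` for all
`γ ∈ Δ` and `⟨λ', α∨⟩ = -1`, then every positive root `β ≠ α` (a nonnegative
integral combination of simple roots) satisfies `⟨λ', β∨⟩ ≤ -(1/2)⟨α, β∨⟩`. -/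
theorem stmt6 {V : Type*} [NormedAddCommGroup V] [InnerProductSpace ℝ V]
    (Δ : Finset V) (α : V) (hαΔ : α ∈ Δ)
    (hΔ0 : ∀ γ ∈ Δ, γ ≠ 0)
    (hneg : ∀ γ ∈ Δ, ∀ δ ∈ Δ, γ ≠ δ → (inner ℝ γ δ : ℝ) ≤ 0)
    (lam' : V)
    (h1 : ∀ γ ∈ Δ, coPair lam' γ ≤ 0)
    (h2 : coPair lam' α = -1)
    (β : V) (n : V → ℕ) (hβ : β = ∑ γ ∈ Δ, (n γ : ℝ) • γ)
    (hβ0 : β ≠ 0) (hβα : β ≠ α) :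
    coPair lam' β ≤ -(1/2) * coPair α β :=
  stmt6_general Δ α hαΔ hneg lam' h1 h2 β n hβ
end

section
/- Let A be a unital associative algebra over ℂ and A₀, A₁, C₋₁, C₀ elements satisfying C₋₁A₀ = 0, A₀C₋₁ = 0, C₀A₀ - C₋₁A₁ = 1, and A₀C₀ - A₁C₋₁ = 1. Let B ∈ A and κ ≠ -1 a scalar, and set E = -κ·1 + (κ+1)·C₀A₀ + C₋₁BA₀. Then E² = κ·1 + (1-κ)·E, and consequently P = (1/(1+κ))(1 - E) is an idempotent. -/
/-- Let `A` be a unital associative ℂ-algebra and `A₀, A₁, C₋₁, C₀ ∈ A` satisfying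
`C₋₁A₀ = 0`, `A₀C₋₁ = 0`, `C₀A₀ - C₋₁A₁ = 1`, `A₀C₀ - A₁C₋₁ = 1`.  For `B ∈ A` and a
scalar `κ ≠ -1`, set `E = -κ·1 + (κ+1)·C₀A₀ + C₋₁BA₀`.  Then
`E² = κ·1 + (1-κ)·E`, and consequently `P = (1/(1+κ))(1-E)` is an idempotent. -/
theorem stmt9 {A : Type*} [Ring A] [Algebra ℂ A]
    (A₀ A₁ Cm₁ C₀ B : A) (κ : ℂ) (hκ : κ ≠ -1)
    (h1 : Cm₁ * A₀ = 0) (h2 : A₀ * Cm₁ = 0)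
    (h3 : C₀ * A₀ - Cm₁ * A₁ = 1) (h4 : A₀ * C₀ - A₁ * Cm₁ = 1)
    (E : A) (hE : E = (-κ) • (1 : A) + (κ + 1) • (C₀ * A₀) + Cm₁ * B * A₀) :
    E ^ 2 = κ • (1 : A) + (1 - κ) • E ∧
    ((1 / (1 + κ)) • ((1 : A) - E)) * ((1 / (1 + κ)) • ((1 : A) - E)) =
      (1 / (1 + κ)) • ((1 : A) - E) := by
  have h4' : A₀ * C₀ = 1 + A₁ * Cm₁ := by rw [← h4]; noncomm_ring
  have hXX : (C₀ * A₀) * (C₀ * A₀) = C₀ * A₀ := by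
    calc (C₀ * A₀) * (C₀ * A₀) = C₀ * (A₀ * C₀) * A₀ := by noncomm_ring
    _ = C₀ * A₀ + C₀ * A₁ * (Cm₁ * A₀) := by rw [h4']; noncomm_ring
    _ = C₀ * A₀ := by rw [h1]; noncomm_ring
  have hXY : (C₀ * A₀) * (Cm₁ * B * A₀) = 0 := by
    calc (C₀ * A₀) * (Cm₁ * B * A₀) = C₀ * (A₀ * Cm₁) * (B * A₀) := by noncomm_ring
    _ = 0 := by rw [h2]; noncomm_ring
  have hYX : (Cm₁ * B * A₀) * (C₀ * A₀) = Cm₁ * B * A₀ := by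
    calc (Cm₁ * B * A₀) * (C₀ * A₀) = Cm₁ * B * (A₀ * C₀) * A₀ := by noncomm_ring
    _ = Cm₁ * B * A₀ + Cm₁ * B * A₁ * (Cm₁ * A₀) := by rw [h4']; noncomm_ring
    _ = Cm₁ * B * A₀ := by rw [h1]; noncomm_ring
  have hYY : (Cm₁ * B * A₀) * (Cm₁ * B * A₀) = 0 := by
    calc (Cm₁ * B * A₀) * (Cm₁ * B * A₀) = Cm₁ * B * (A₀ * Cm₁) * (B * A₀) := by noncomm_ring
    _ = 0 := by rw [h2]; noncomm_ring
  have hsq : E ^ 2 = κ • (1 : A) + (1 - κ) • E := by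
    subst hE
    simp only [pow_two, add_mul, mul_add, smul_mul_assoc, mul_smul_comm, mul_one, one_mul,
      smul_smul, hXX, hXY, hYX, hYY, smul_zero, add_zero, zero_add, smul_add]
    module
  refine ⟨hsq, ?_⟩
  have h1κ : (1 + κ) ≠ 0 := by
    intro h; apply hκ; linear_combination h
  have key : ((1 : A) - E) * ((1 : A) - E) = (1 + κ) • ((1 : A) - E) := by
    have : ((1 : A) - E) * ((1 : A) - E) = 1 - 2 • E + E ^ 2 := by noncomm_ring
    rw [this, hsq]
    module
  rw [smul_mul_smul_comm, key, smul_smul]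
  congr 1
  field_simp
end
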